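/- arXiv:math/0612366 — 4 statements merged into one kernel-verified Lean document; each statement's English description precedes it below -/
import Mathlib

section
/- A topological space X is completely normal (T5, meaning every subspace is T4) if and only if every open subspace of X is T4. -/
open Set Topology

lemma aux_cn {X : Type*} [TopologicalSpace X]
    (h : ∀ U : Set X, IsOpen U → NormalSpace U) : CompletelyNormalSpace X := by
  constructor
  intro s t hst hst'
  rw [← separatedNhds_iff_disjoint]
  set V : Set X := (closure s ∩ closure t)ᶜ with hVdef
  have hV : IsOpen V := by
    simp only [hVdef, isOpen_compl_iff]
    exact (isClosed_closure.inter isClosed_closure)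
  haveI := h V hV
  have hA : IsClosed ((Subtype.val : V → X) ⁻¹' closure s) :=
    isClosed_closure.preimage continuous_subtype_val
  have hB : IsClosed ((Subtype.val : V → X) ⁻¹' closure t) :=
    isClosed_closure.preimage continuous_subtype_val
  have hdisj : Disjoint ((Subtype.val : V → X) ⁻¹' closure s)
      ((Subtype.val : V → X) ⁻¹' closure t) := by
    rw [Set.disjoint_left]
    rintro ⟨x, hxV⟩ hxs hxt
    exact hxV ⟨hxs, hxt⟩
  obtain ⟨u, v, hu, hv, hAu, hBv, huv⟩ := NormalSpace.normal _ _ hA hB hdisj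
  refine ⟨Subtype.val '' u, Subtype.val '' v, hV.isOpenMap_subtype_val _ hu,
    hV.isOpenMap_subtype_val _ hv, ?_, ?_, ?_⟩
  · intro x hx
    have hxV : x ∈ V := fun ⟨_, hx2⟩ => (hst'.le_bot ⟨hx, hx2⟩ : x ∈ (∅ : Set X))
    exact ⟨⟨x, hxV⟩, hAu (subset_closure hx), rfl⟩
  · intro x hx
    have hxV : x ∈ V := fun ⟨hx1, _⟩ => (hst.le_bot ⟨hx1, hx⟩ : x ∈ (∅ : Set X))
    exact ⟨⟨x, hxV⟩, hBv (subset_closure hx), rfl⟩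
  · exact (huv.image (Set.injOn_of_injective Subtype.val_injective) (Set.subset_univ _) (Set.subset_univ _))

/-- A topological space `X` is completely normal (T5: every subspace is T4, where T4 means
disjoint closed sets can be separated by disjoint open sets, Hausdorff not assumed) if and
only if every open subspace of `X` is T4. -/
theorem stmt3 {X : Type*} [TopologicalSpace X] :
    (∀ s : Set X, NormalSpace s) ↔ (∀ U : Set X, IsOpen U → NormalSpace U) := by
  refine ⟨fun h U _ => h U, fun h s => ?_⟩
  haveI := aux_cn h
  infer_instance
end

section
/- Let X be a T5 topological space, and let C1, C2 ⊆ X be closed with C0 := C1 ∩ C2. Then there exist open sets V1, V2 ⊆ X such that C_i \ V_i = C0 for i = 1,2, V1 ∩ V2 = ∅, and closure(V1) ∩ closure(V2) ⊆ C0. -/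
/-- Let `X` be a T5 space (every subspace is normal) and `C1, C2 ⊆ X` closed with
`C0 = C1 ∩ C2`. Then there are open `V1, V2` with `Cᵢ \ Vᵢ = C0`, `V1 ∩ V2 = ∅`, and
`closure V1 ∩ closure V2 ⊆ C0`. -/
theorem stmt5 {X : Type*} [TopologicalSpace X]
    (hT5 : ∀ s : Set X, NormalSpace s)
    (C1 C2 : Set X) (h1 : IsClosed C1) (h2 : IsClosed C2) :
    ∃ V1 V2 : Set X, IsOpen V1 ∧ IsOpen V2 ∧
      C1 \ V1 = C1 ∩ C2 ∧ C2 \ V2 = C1 ∩ C2 ∧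
      V1 ∩ V2 = ∅ ∧ closure V1 ∩ closure V2 ⊆ C1 ∩ C2 := by
  set C0 : Set X := C1 ∩ C2 with hC0
  set Y : Set X := C0ᶜ with hY
  have hYopen : IsOpen Y := (h1.inter h2).isOpen_compl
  haveI : NormalSpace Y := hT5 Y
  have hemb := hYopen.isOpenEmbedding_subtypeVal
  -- closed subsets of Y
  set A : Set Y := Subtype.val ⁻¹' C1 with hA
  set B : Set Y := Subtype.val ⁻¹' C2 with hB
  have hAc : IsClosed A := h1.preimage continuous_subtype_val
  have hBc : IsClosed B := h2.preimage continuous_subtype_val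
  have hdisj : Disjoint A B := by
    rw [Set.disjoint_left]
    rintro ⟨y, hy⟩ hyA hyB
    exact hy ⟨hyA, hyB⟩
  obtain ⟨U, V, hU, hV, hAU, hBV, hUV⟩ := normal_separation hAc hBc hdisj
  obtain ⟨U', hU', hAU', hclU'⟩ := normal_exists_closure_subset hAc hU hAU
  obtain ⟨V', hV', hBV', hclV'⟩ := normal_exists_closure_subset hBc hV hBV
  refine ⟨Subtype.val '' U', Subtype.val '' V',
    hemb.isOpenMap _ hU', hemb.isOpenMap _ hV', ?_, ?_, ?_, ?_⟩
  · apply Set.Subset.antisymm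
    · rintro x ⟨hx1, hx2⟩
      by_contra hx0
      exact hx2 ⟨⟨x, hx0⟩, hAU' hx1, rfl⟩
    · rintro x hx
      refine ⟨hx.1, ?_⟩
      rintro ⟨⟨y, hy⟩, -, rfl⟩
      exact hy hx
  · apply Set.Subset.antisymm
    · rintro x ⟨hx1, hx2⟩
      by_contra hx0
      exact hx2 ⟨⟨x, hx0⟩, hBV' hx1, rfl⟩
    · rintro x hx
      refine ⟨hx.2, ?_⟩
      rintro ⟨⟨y, hy⟩, -, rfl⟩
      exact hy hx
  · ext x
    simp only [Set.mem_inter_iff, Set.mem_empty_iff_false, iff_false]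
    rintro ⟨⟨⟨y, hy⟩, hyU, rfl⟩, ⟨⟨z, hz⟩, hzV, hzx⟩⟩
    have : (⟨z, hz⟩ : Y) = ⟨y, hy⟩ := Subtype.ext hzx
    rw [this] at hzV
    exact Set.disjoint_left.mp hUV (hclU' (subset_closure hyU)) (hclV' (subset_closure hzV))
  · rintro x ⟨hx1, hx2⟩
    by_contra hx0
    have h1' : (⟨x, hx0⟩ : Y) ∈ closure U' := by
      rw [hemb.toIsEmbedding.closure_eq_preimage_closure_image U']
      exact hx1
    have h2' : (⟨x, hx0⟩ : Y) ∈ closure V' := by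
      rw [hemb.toIsEmbedding.closure_eq_preimage_closure_image V']
      exact hx2
    exact Set.disjoint_left.mp hUV (hclU' h1') (hclV' h2')
end

section
/- Let A ⊆ M^k be definable in an o-minimal structure M expanding an ordered group, and X = Sp(A). An open subset C ⊆ X is quasi-compact (in the spectral topology) if and only if C = Sp(D) for some definable D ⊆ A. -/
open FirstOrder Set Classical

/-- `Defin L M s` : the set `s ⊆ Mᵏ` is definable in the structure `M` with parameters from `M`. -/
def Defin (L : FirstOrder.Language) (M : Type) [L.Structure M] {k : ℕ}
    (s : Set (Fin k → M)) : Prop :=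
  Set.Definable (Set.univ : Set M) L s

/-- `M` is an o-minimal structure: the order is definable, and every definable subset of `M`
is a finite union of points and open intervals (possibly unbounded). -/
def IsOMin (L : FirstOrder.Language) (M : Type) [L.Structure M] [LinearOrder M] : Prop :=
  Set.Definable (Set.univ : Set M) L {p : Fin 2 → M | p 0 < p 1} ∧
  ∀ s : Set (Fin 1 → M), Defin L M s →
    ∃ (F : Finset M) (n : ℕ) (J : Fin n → Set M),
      (∀ i, (∃ a b, J i = Set.Ioo a b) ∨ (∃ a, J i = Set.Ioi a) ∨
            (∃ b, J i = Set.Iio b) ∨ J i = Set.univ) ∧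
      (fun p : Fin 1 → M => p 0) '' s = ↑F ∪ ⋃ i, J i

/-- `M` expands an ordered group: the graph of addition is definable. -/
def ExpandsGroup (L : FirstOrder.Language) (M : Type) [L.Structure M] [Add M] : Prop :=
  Set.Definable (Set.univ : Set M) L {p : Fin 3 → M | p 0 + p 1 = p 2}

/-- `M` expands a (real closed, by o-minimality) field: graphs of `+` and `*` are definable. -/
def ExpandsField (L : FirstOrder.Language) (M : Type) [L.Structure M] [Add M] [Mul M] : Prop :=
  Set.Definable (Set.univ : Set M) L {p : Fin 3 → M | p 0 + p 1 = p 2} ∧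
  Set.Definable (Set.univ : Set M) L {p : Fin 3 → M | p 0 * p 1 = p 2}

/-- o-minimal dimension of a subset of `Mᵏ` : the largest `d` such that some coordinate
projection onto `M^d` has nonempty interior; `-1` for the empty set. -/

noncomputable def odim {M : Type} [TopologicalSpace M] {k : ℕ} (s : Set (Fin k → M)) : ℤ :=
  if s.Nonempty then
    ((sSup {d : ℕ | ∃ f : Fin d → Fin k, Function.Injective f ∧
      (interior ((fun x : Fin k → M => x ∘ f) '' s)).Nonempty} : ℕ) : ℤ)
  else -1

/-- A point of the o-minimal spectrum `Sp A`: a complete type over `M` concentrated on `A`,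
presented as an ultrafilter on the Boolean algebra of definable subsets of `A`. -/
structure OType (L : FirstOrder.Language) (M : Type) [L.Structure M] {k : ℕ}
    (A : Set (Fin k → M)) where
  sets : Set (Set (Fin k → M))
  definable_mem : ∀ s ∈ sets, Defin L M s
  subset_mem : ∀ s ∈ sets, s ⊆ A
  top_mem : A ∈ sets
  nonempty_mem : ∀ s ∈ sets, s.Nonempty
  inter_mem : ∀ s ∈ sets, ∀ t ∈ sets, s ∩ t ∈ sets
  complete : ∀ s : Set (Fin k → M), Defin L M s → s ⊆ A → (s ∈ sets ∨ A \ s ∈ sets)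

/-- The spectral topology on `Sp A`, generated by the sets `Sp U` for `U` open definable. -/
instance OType.topology (L : FirstOrder.Language) (M : Type) [L.Structure M] [TopologicalSpace M]
    {k : ℕ} (A : Set (Fin k → M)) : TopologicalSpace (OType L M A) :=
  TopologicalSpace.generateFrom
    {V | ∃ U : Set (Fin k → M), IsOpen U ∧ Defin L M U ∧
      V = {x : OType L M A | U ∩ A ∈ x.sets}}

/-- The dimension of a type: the minimal dimension of a definable set on which it concentrates. -/
noncomputable def OType.tdim {L : FirstOrder.Language} {M : Type} [L.Structure M]
    [TopologicalSpace M] {k : ℕ} {A : Set (Fin k → M)} (x : OType L M A) : ℤ :=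
  sInf {d : ℤ | ∃ s ∈ x.sets, odim s = d}

/-!
Every ultrafilter on `Mᵏ` containing `A` restricts to a type over `A`, so a cover of `Sp D` by
sets `Sp W` pulls back to a cover of the closed set `{u | D ∈ u}` of the compact Stone–Čech
space of `Mᵏ`; a finite subcover, tested on principal ultrafilters, gives `D ⊆ ⋃ W` over
finitely many `W`. Hence every `Sp D` is quasi-compact. The sets `Sp (U ∩ A)` with `U` open
definable then form a basis of compact opens, so a compact open set is a finite union of them,
i.e. `Sp` of a finite union of definable sets.
-/

namespace OType

variable {L : FirstOrder.Language} {M : Type} [L.Structure M] {k : ℕ} {A : Set (Fin k → M)}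

def sp (D : Set (Fin k → M)) : Set (OType L M A) := {x | D ∈ x.sets}

theorem mem_of_superset (x : OType L M A) {s t : Set (Fin k → M)}
    (hs : s ∈ x.sets) (ht : Defin L M t) (htA : t ⊆ A) (hst : s ⊆ t) : t ∈ x.sets := by
  refine (x.complete t ht htA).resolve_right fun hc => ?_
  obtain ⟨a, has, -, hat⟩ := x.nonempty_mem _ (x.inter_mem s hs _ hc)
  exact hat (hst has)

theorem union_mem_iff (x : OType L M A) {s t : Set (Fin k → M)}
    (hs : Defin L M s) (hsA : s ⊆ A) (ht : Defin L M t) (htA : t ⊆ A) :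
    s ∪ t ∈ x.sets ↔ s ∈ x.sets ∨ t ∈ x.sets := by
  refine ⟨fun h => ?_, ?_⟩
  · refine (x.complete s hs hsA).imp id fun hs' => (x.complete t ht htA).resolve_right ?_
    intro ht'
    obtain ⟨a, ⟨hst, -, has⟩, -, hat⟩ :=
      x.nonempty_mem _ (x.inter_mem _ (x.inter_mem _ h _ hs') _ ht')
    exact hst.elim has hat
  · rintro (h | h)
    · exact x.mem_of_superset h (hs.union ht) (union_subset hsA htA) subset_union_left
    · exact x.mem_of_superset h (hs.union ht) (union_subset hsA htA) subset_union_right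

theorem biUnion_mem_iff {ι : Type*} (x : OType L M A) (t : Finset ι)
    {f : ι → Set (Fin k → M)} (hf : ∀ i, Defin L M (f i)) (hfA : ∀ i, f i ⊆ A) :
    (⋃ i ∈ t, f i) ∈ x.sets ↔ ∃ i ∈ t, f i ∈ x.sets := by
  classical
  induction t using Finset.induction with
  | empty => simpa using fun h => (x.nonempty_mem _ h).ne_empty rfl
  | insert i t _ ih =>
    rw [Finset.set_biUnion_insert, x.union_mem_iff (hf i) (hfA i)
      (Set.definable_biUnion_finset hf t) (iUnion₂_subset fun j _ => hfA j), ih,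
      Finset.exists_mem_insert]

theorem sp_inter {s t : Set (Fin k → M)} (hs : Defin L M s) (hsA : s ⊆ A)
    (ht : Defin L M t) (htA : t ⊆ A) : (sp (s ∩ t) : Set (OType L M A)) = sp s ∩ sp t := by
  ext x
  exact ⟨fun h => ⟨x.mem_of_superset h hs hsA inter_subset_left,
    x.mem_of_superset h ht htA inter_subset_right⟩, fun h => x.inter_mem _ h.1 _ h.2⟩

theorem sp_biUnion {ι : Type*} (t : Finset ι) {f : ι → Set (Fin k → M)}
    (hf : ∀ i, Defin L M (f i)) (hfA : ∀ i, f i ⊆ A) :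
    (sp (⋃ i ∈ t, f i) : Set (OType L M A)) = ⋃ i ∈ t, sp (f i) := by
  ext x
  simp only [mem_iUnion₂, exists_prop]
  exact x.biUnion_mem_iff t hf hfA

def ofUltrafilter (hA : Defin L M A) (u : Ultrafilter (Fin k → M)) (hAu : A ∈ u) :
    OType L M A where
  sets := {s | Defin L M s ∧ s ⊆ A ∧ s ∈ u}
  definable_mem _ hs := hs.1
  subset_mem _ hs := hs.2.1
  top_mem := ⟨hA, subset_rfl, hAu⟩
  nonempty_mem _ hs := u.nonempty_of_mem hs.2.2
  inter_mem _ hs _ ht :=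
    ⟨hs.1.inter ht.1, inter_subset_left.trans hs.2.1, Filter.inter_mem hs.2.2 ht.2.2⟩
  complete s hs hsA := by
    by_cases h : s ∈ u
    · exact Or.inl ⟨hs, hsA, h⟩
    · exact Or.inr
        ⟨hA.sdiff hs, sdiff_subset, Filter.sdiff_mem hAu (u.compl_mem_iff_notMem.2 h)⟩

theorem exists_finset_subset_biUnion_of_sp_subset (hA : Defin L M A) {D : Set (Fin k → M)}
    (hD : Defin L M D) (hDA : D ⊆ A) {ι : Type*} {W : ι → Set (Fin k → M)}
    (hW : (sp D : Set (OType L M A)) ⊆ ⋃ i, sp (W i)) : ∃ t : Finset ι, D ⊆ ⋃ i ∈ t, W i := by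
  have hcover : {u : Ultrafilter (Fin k → M) | D ∈ u} ⊆ ⋃ i, {u | W i ∈ u} := fun u hDu => by
    have hx : ofUltrafilter hA u (Filter.mem_of_superset hDu hDA) ∈ sp D := ⟨hD, hDA, hDu⟩
    obtain ⟨i, hi⟩ := mem_iUnion.1 (hW hx)
    exact mem_iUnion.2 ⟨i, hi.2.2⟩
  obtain ⟨t, ht⟩ := (ultrafilter_isClosed_basic D).isCompact.elim_finite_subcover _
    (fun i => ultrafilter_isOpen_basic (W i)) hcover
  exact ⟨t, fun a ha => by simpa using ht (show pure a ∈ {u | D ∈ u} from ha)⟩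

theorem isCompact_sp [TopologicalSpace M] (hA : Defin L M A) {D : Set (Fin k → M)}
    (hD : Defin L M D) (hDA : D ⊆ A) : IsCompact (sp D : Set (OType L M A)) := by
  refine isCompact_generateFrom' rfl fun ι V hV => ?_
  choose W _ hWd hVW using fun i => (V i).2
  replace hVW : ∀ i, (V i : Set (OType L M A)) = sp (W i ∩ A) := hVW
  obtain ⟨t, ht⟩ := exists_finset_subset_biUnion_of_sp_subset hA hD hDA (W := fun i => W i ∩ A)
    (by simpa only [hVW] using hV)
  refine ⟨t, t.finite_toSet, ?_⟩
  have hWA : ∀ i, Defin L M (W i ∩ A) := fun i => (hWd i).inter hA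
  calc sp D ⊆ sp (⋃ i ∈ t, W i ∩ A) := fun x hx => x.mem_of_superset hx
        (Set.definable_biUnion_finset hWA t) (iUnion₂_subset fun _ _ => inter_subset_right) ht
    _ = ⋃ i ∈ t, V i := by
        rw [sp_biUnion t hWA fun _ => inter_subset_right]
        simp only [hVW]

theorem isTopologicalBasis_sp [TopologicalSpace M] (hA : Defin L M A) :
    TopologicalSpace.IsTopologicalBasis
      (range fun U : {U : Set (Fin k → M) // IsOpen U ∧ Defin L M U} =>
        (sp (U.1 ∩ A) : Set (OType L M A))) := by
  refine ⟨?_, ?_, ?_⟩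
  · rintro _ ⟨⟨U₁, hU₁o, hU₁d⟩, rfl⟩ _ ⟨⟨U₂, hU₂o, hU₂d⟩, rfl⟩ x hx
    refine ⟨_, ⟨⟨U₁ ∩ U₂, hU₁o.inter hU₂o, hU₁d.inter hU₂d⟩, rfl⟩, ?_⟩
    change x ∈ sp (U₁ ∩ U₂ ∩ A) ∧ sp (U₁ ∩ U₂ ∩ A) ⊆ sp (U₁ ∩ A) ∩ sp (U₂ ∩ A)
    rw [inter_inter_distrib_right,
      sp_inter (hU₁d.inter hA) inter_subset_right (hU₂d.inter hA) inter_subset_right]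
    exact ⟨hx, subset_rfl⟩
  · exact sUnion_eq_univ_iff.2 fun x =>
      ⟨_, ⟨⟨univ, isOpen_univ, Set.definable_univ⟩, rfl⟩, by simpa [sp] using x.top_mem⟩
  · refine congrArg TopologicalSpace.generateFrom (ext fun V => ?_)
    simp only [mem_range, Subtype.exists, exists_prop, mem_ofPred_eq, sp, eq_comm, and_assoc]

end OType

theorem stmt13_general {L : FirstOrder.Language} {M : Type} [L.Structure M]
    [TopologicalSpace M]
    {k : ℕ} (A : Set (Fin k → M)) (hA : Defin L M A)
    (C : Set (OType L M A)) (hC : IsOpen C) :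
    IsCompact C ↔
      ∃ D : Set (Fin k → M), Defin L M D ∧ D ⊆ A ∧
        C = {x : OType L M A | D ∈ x.sets} := by
  constructor
  · intro hCc
    obtain ⟨s, hs, rfl⟩ := eq_finite_iUnion_of_isTopologicalBasis_of_isCompact_open _
      (OType.isTopologicalBasis_sp hA) C hCc hC
    obtain ⟨t, rfl⟩ := hs.exists_finset_coe
    have hUA : ∀ U : {U : Set (Fin k → M) // IsOpen U ∧ Defin L M U}, Defin L M (U.1 ∩ A) :=
      fun U => U.2.2.inter hA
    exact ⟨⋃ U ∈ t, U.1 ∩ A, Set.definable_biUnion_finset hUA t,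
      iUnion₂_subset fun _ _ => inter_subset_right,
      (OType.sp_biUnion t hUA fun _ => inter_subset_right).symm⟩
  · rintro ⟨D, hD, hDA, rfl⟩
    exact OType.isCompact_sp hA hD hDA

/-- For `A ⊆ Mᵏ` definable in an o-minimal structure `M` expanding an ordered group, an open
subset `C` of `Sp A` is quasi-compact iff `C = Sp D` for some definable `D ⊆ A`. -/
theorem stmt13 {L : FirstOrder.Language} {M : Type} [L.Structure M]
    [AddCommGroup M] [LinearOrder M] [IsOrderedAddMonoid M] [TopologicalSpace M] [OrderTopology M]
    (hmin : IsOMin L M) (hgrp : ExpandsGroup L M)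
    {k : ℕ} (A : Set (Fin k → M)) (hA : Defin L M A)
    (C : Set (OType L M A)) (hC : IsOpen C) :
    IsCompact C ↔
      ∃ D : Set (Fin k → M), Defin L M D ∧ D ⊆ A ∧
        C = {x : OType L M A | D ∈ x.sets} :=
  stmt13_general A hA C hC
end

section
/- Let M be an o-minimal expansion of a real closed field and A ⊆ M^k definable. Then A is definably compact (closed and bounded) if and only if for every definable set B and every definable continuous f : A → B, the image f(A) is closed in B. -/
open FirstOrder Set Classical

/-!
For `b` in the closure of `f(A)`, the sets `S t = {x ∈ A | |f x - b| ≤ t}` form a monotone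
definable family of nonempty bounded sets. By o-minimality every nonempty bounded definable
subset of `M` has a supremum, and this fixes, one coordinate at a time, a point `v` that is
`t`-close to a member of every `S t`. Since `A` is closed and `f` is continuous, `v ∈ A` and
`f v = b`. Conversely, the identity map shows that `A` is closed, and if `A` were unbounded in
the coordinate `i` then `0` would lie in the closure of the image of `x ↦ (1 + x i ^ 2)⁻¹` but
not in the image.
-/

open Filter Topology

section Definability

variable {L : FirstOrder.Language} {M : Type} [L.Structure M] {α : Type}

theorem definableFun_of_definable_binop_graph {op : M → M → M}
    (h : Definable univ L {p : Fin 3 → M | op (p 0) (p 1) = p 2}) :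
    DefinableFun L univ fun v : Fin 2 → M => op (v 0) (v 1) := by
  simpa [DefinableFun, Function.tupleGraph] using h.preimage_comp ![some 0, some 1, none]

theorem definableMap_pair {F G : (α → M) → M} (hF : DefinableFun L univ F)
    (hG : DefinableFun L univ G) : DefinableMap L univ fun v => ![F v, G v] := by
  simp [DefinableMap, Fin.forall_fin_two, hF, hG]

theorem Set.DefinableFun.comp₂ {op : M → M → M}
    (hop : DefinableFun L univ fun v : Fin 2 → M => op (v 0) (v 1))
    {F G : (α → M) → M} (hF : DefinableFun L univ F) (hG : DefinableFun L univ G) :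
    DefinableFun L univ fun v => op (F v) (G v) :=
  hop.comp (definableMap_pair hF hG)

theorem Set.DefinableFun.add [Add M] (hadd : ExpandsGroup L M)
    {F G : (α → M) → M} (hF : DefinableFun L univ F) (hG : DefinableFun L univ G) :
    DefinableFun L univ fun v => F v + G v :=
  (definableFun_of_definable_binop_graph hadd).comp₂ hF hG

theorem Set.DefinableFun.sub [AddGroup M] (hadd : ExpandsGroup L M)
    {F G : (α → M) → M} (hF : DefinableFun L univ F) (hG : DefinableFun L univ G) :
    DefinableFun L univ fun v => F v - G v := by
  refine (definableFun_of_definable_binop_graph ?_).comp₂ hF hG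
  simpa [sub_eq_iff_eq_add, eq_comm] using hadd.preimage_comp ![2, 1, 0]

theorem Set.DefinableFun.mul [Add M] [Mul M] (hfld : ExpandsField L M)
    {F G : (α → M) → M} (hF : DefinableFun L univ F) (hG : DefinableFun L univ G) :
    DefinableFun L univ fun v => F v * G v :=
  (definableFun_of_definable_binop_graph hfld.2).comp₂ hF hG

theorem Set.DefinableFun.inv [Field M] (hfld : ExpandsField L M)
    {F : (α → M) → M} (hF : DefinableFun L univ F) :
    DefinableFun L univ fun v => (F v)⁻¹ := by
  have hproj (o : Option (Fin 1)) : DefinableFun L univ fun v : Option (Fin 1) → M => v o :=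
    DefinableFun.proj L
  have hinv : DefinableFun L univ fun v : Fin 1 → M => (v 0)⁻¹ := by
    unfold DefinableFun
    convert (((hproj (some 0)).ofPred_eq_const (mem_univ 0)).inter
      ((hproj none).ofPred_eq_const (mem_univ 0))).union
      (((hproj (some 0)).mul hfld (hproj none)).ofPred_eq_const (mem_univ 1)) using 1
    ext w
    simp only [Function.tupleGraph, mem_ofPred, mem_union, mem_inter_iff, Function.comp_apply]
    by_cases h0 : w (some 0) = 0
    · simp [h0, eq_comm]
    · simp only [h0, false_and, false_or]
      exact ⟨fun h => h ▸ mul_inv_cancel₀ h0, inv_eq_of_mul_eq_one_right⟩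
  exact hinv.comp (g := fun v _ => F v) fun _ => hF

theorem definable_graph_iff {m n : ℕ}
    {f : (Fin m → M) → Fin n → M} :
    Definable univ L {p : Fin (m + n) → M |
      f (fun i => p (Fin.castAdd n i)) = fun j => p (Fin.natAdd m j)} ↔
      DefinableMap L univ f := by
  constructor
  · intro hG j
    unfold DefinableFun
    convert ((hG.preimage_comp (Fin.addCases (Sum.inl ∘ some) Sum.inr)).inter
      ((DefinableFun.proj L (i := Sum.inr j)).ofPred_eq
        (DefinableFun.proj L (i := Sum.inl none)))).exists_of_finite using 1
    ext w
    simp [Function.tupleGraph, Function.comp_def]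
  · intro hf
    convert definable_iInter_of_finite fun j =>
      ((hf j).comp fun i => DefinableFun.proj L (i := Fin.castAdd n i)).ofPred_eq
        (DefinableFun.proj L (i := Fin.natAdd m j)) using 1
    ext p
    simp [funext_iff]

end Definability

section Order

variable {L : FirstOrder.Language} {M : Type} [L.Structure M] [LinearOrder M] {α ι : Type}

theorem definable_lt (hlt : Definable univ L {p : Fin 2 → M | p 0 < p 1})
    {F G : (α → M) → M} (hF : DefinableFun L univ F) (hG : DefinableFun L univ G) :
    Definable univ L {v | F v < G v} :=
  hlt.preimage_map (definableMap_pair hF hG)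

theorem definable_le (hlt : Definable univ L {p : Fin 2 → M | p 0 < p 1})
    {F G : (α → M) → M} (hF : DefinableFun L univ F) (hG : DefinableFun L univ G) :
    Definable univ L {v | F v ≤ G v} := by
  simpa [compl_ofPred] using (definable_lt hlt hG hF).compl

theorem definable_abs_sub_le [AddCommGroup M] [IsOrderedAddMonoid M]
    (hlt : Definable univ L {p : Fin 2 → M | p 0 < p 1}) (hadd : ExpandsGroup L M)
    {F G H : (α → M) → M} (hF : DefinableFun L univ F) (hG : DefinableFun L univ G)
    (hH : DefinableFun L univ H) :
    Definable univ L {v | |F v - G v| ≤ H v} := by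
  simpa [abs_sub_le_iff, ← ofPred_and] using
    (definable_le hlt (hF.sub hadd hG) hH).inter (definable_le hlt (hG.sub hadd hF) hH)

theorem exists_forall_lt_abs_apply_of_not_bounded [AddGroup M] [Finite ι] {A : Set (ι → M)}
    (h : ¬∃ r, ∀ x ∈ A, ∀ i, |x i| ≤ r) : ∃ i, ∀ r, ∃ x ∈ A, r < |x i| := by
  by_contra! h'
  choose R hR using h'
  obtain ⟨r, hr⟩ := Finite.exists_le R
  exact h ⟨r, fun x hx i => (hR i x hx).trans (hr i)⟩

theorem exists_isLUB_union {s t : Set M} (hs : s.Nonempty → BddAbove s → ∃ a, IsLUB s a)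
    (ht : t.Nonempty → BddAbove t → ∃ a, IsLUB t a) (hne : (s ∪ t).Nonempty)
    (hbdd : BddAbove (s ∪ t)) : ∃ a, IsLUB (s ∪ t) a := by
  rw [bddAbove_union] at hbdd
  rcases s.eq_empty_or_nonempty with rfl | hs'
  · simpa using ht (by simpa using hne) hbdd.2
  rcases t.eq_empty_or_nonempty with rfl | ht'
  · simpa using hs hs' hbdd.1
  obtain ⟨a, ha⟩ := hs hs' hbdd.1
  obtain ⟨b, hb⟩ := ht ht' hbdd.2
  exact ⟨_, ha.union hb⟩

theorem exists_isLUB_biUnion (I : Finset ι) {t : ι → Set M}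
    (ht : ∀ i ∈ I, (t i).Nonempty → BddAbove (t i) → ∃ a, IsLUB (t i) a) :
    (⋃ i ∈ I, t i).Nonempty → BddAbove (⋃ i ∈ I, t i) → ∃ a, IsLUB (⋃ i ∈ I, t i) a := by
  classical
  induction I using Finset.induction_on with
  | empty => simp
  | insert i I _ ih =>
    rw [Finset.set_biUnion_insert]
    exact exists_isLUB_union (ht i (Finset.mem_insert_self _ _))
      (ih fun j hj => ht j (Finset.mem_insert_of_mem hj))

theorem exists_isLUB_of_definable [DenselyOrdered M] [NoMaxOrder M] (hmin : IsOMin L M)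
    {s : Set M} (hs : Definable₁ univ L s) (hne : s.Nonempty) (hbdd : BddAbove s) :
    ∃ a, IsLUB s a := by
  obtain ⟨F, n, J, hJ, hFJ⟩ := hmin.2 _ hs
  have himage : (fun p : Fin 1 → M => p 0) '' {x | x 0 ∈ s} = s :=
    Subset.antisymm (image_subset_iff.2 fun _ => id) fun y hy => ⟨fun _ => y, hy, rfl⟩
  have hJ_lub (i : Fin n) (hne : (J i).Nonempty) (hbdd : BddAbove (J i)) :
      ∃ a, IsLUB (J i) a := by
    rcases hJ i with ⟨a, b, hi⟩ | ⟨a, hi⟩ | ⟨b, hi⟩ | hi <;> rw [hi] at hne hbdd ⊢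
    · exact ⟨b, isLUB_Ioo (nonempty_Ioo.1 hne)⟩
    · exact absurd hbdd (not_bddAbove_Ioi a)
    · exact ⟨b, isLUB_Iio⟩
    · exact absurd hbdd not_bddAbove_univ
  rw [himage] at hFJ
  rw [hFJ] at hne hbdd ⊢
  refine exists_isLUB_union ?_ ?_ hne hbdd
  · rw [← biUnion_of_singleton (F : Set M)]
    exact exists_isLUB_biUnion F fun a _ _ _ => ⟨a, isLUB_singleton⟩
  · simpa using exists_isLUB_biUnion Finset.univ fun i _ => hJ_lub i

end Order

def DefinableFamily (L : FirstOrder.Language) {M : Type} [L.Structure M] {ι : Type}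
    (S : M → Set (ι → M)) : Prop :=
  Definable univ L {w : Option ι → M | w ∘ some ∈ S (w none)}

section Family

variable {L : FirstOrder.Language} {M : Type} [L.Structure M] {α ι : Type}

theorem DefinableFamily.definable_mem [Finite ι] {S : M → Set (ι → M)} (hS : DefinableFamily L S)
    {F : (α → M) → M} {X : (α → M) → ι → M} (hF : DefinableFun L univ F)
    (hX : DefinableMap L univ X) : Definable univ L {v | X v ∈ S (F v)} := by
  simpa [Function.comp_def] using
    hS.preimage_map (F := fun v o => o.elim (F v) (X v)) (by rintro (_ | l); exacts [hF, hX l])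

variable [Field M] [LinearOrder M] [IsStrictOrderedRing M]

theorem DefinableFamily.sep_abs_sub_le (hlt : Definable univ L {p : Fin 2 → M | p 0 < p 1})
    (hadd : ExpandsGroup L M) {S : M → Set (ι → M)} (hS : DefinableFamily L S)
    (I : Finset ι) (v : ι → M) :
    DefinableFamily L fun t => {x ∈ S t | ∀ l ∈ I, |x l - v l| ≤ t} := by
  have hnear (l : ι) : Definable univ L {w : Option ι → M | |w (some l) - v l| ≤ w none} :=
    definable_abs_sub_le hlt hadd (DefinableFun.proj L)
      (L.definableFun_const _ (mem_univ _)) (DefinableFun.proj L)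
  unfold DefinableFamily
  convert hS.inter (definable_biInter_finset hnear I) using 1
  ext w
  simp

theorem DefinableFamily.exists_abs_apply_sub_le [Finite ι] (hmin : IsOMin L M)
    {T : M → Set (ι → M)} (hT : DefinableFamily L T) (hmono : Monotone T)
    (hne : ∀ t, 0 < t → (T t).Nonempty) (i : ι) {r : M} (hr : ∀ t, ∀ x ∈ T t, |x i| ≤ r) :
    ∃ s, ∀ t, 0 < t → ∃ x ∈ T t, |x i - s| ≤ t := by
  -- `sup D` is the limit of `inf {x i | x ∈ T t}` as `t → 0⁺`, without an infimum for each `t`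
  set D : Set M := {y | ∃ t, 0 < t ∧ ∀ x ∈ T t, y ≤ x i}
  have hD : Definable₁ univ L D := by
    have hle : Definable univ L {w : (Fin 1 ⊕ Unit) ⊕ ι → M |
        w ∘ Sum.inr ∈ T (w (.inl (.inr ()))) → w (.inl (.inl 0)) ≤ w (.inr i)} :=
      (hT.definable_mem (DefinableFun.proj L) fun _ => DefinableFun.proj L).himp
        (definable_le hmin.1 (DefinableFun.proj L) (DefinableFun.proj L))
    have hpos : Definable univ L {w : Fin 1 ⊕ Unit → M | 0 < w (.inr ())} :=
      definable_lt hmin.1 (L.definableFun_const _ (mem_univ _)) (DefinableFun.proj L)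
    unfold Definable₁
    convert (hpos.inter hle.forall_of_finite).exists_of_finite using 1
    ext p
    exact ⟨fun ⟨t, ht, h⟩ => ⟨fun _ => t, ht, h⟩, fun ⟨u, hu, h⟩ => ⟨u (), hu, h⟩⟩
  have hD_ne : D.Nonempty := ⟨-r, 1, one_pos, fun x hx => neg_le_of_abs_le (hr 1 x hx)⟩
  have hD_bdd : BddAbove D := by
    refine ⟨r, ?_⟩
    rintro y ⟨t, ht, hy⟩
    obtain ⟨x, hx⟩ := hne t ht
    exact (hy x hx).trans (le_of_abs_le (hr t x hx))
  obtain ⟨s, hs⟩ := exists_isLUB_of_definable hmin hD hD_ne hD_bdd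
  refine ⟨s, fun t ht => ?_⟩
  obtain ⟨y, ⟨t₀, ht₀, hy⟩, hsy, -⟩ := hs.exists_between (sub_lt_self s ht)
  obtain ⟨x, hx, hxs⟩ : ∃ x ∈ T (min t₀ t), x i < s + t := by
    by_contra! h
    exact (lt_add_of_pos_right s ht).not_ge (hs.1 ⟨_, lt_min ht₀ ht, h⟩)
  have hyx := hy x (hmono (min_le_left _ _) hx)
  exact ⟨x, hmono (min_le_right _ _) hx, abs_sub_le_iff.2 ⟨by linarith, by linarith⟩⟩

theorem DefinableFamily.exists_forall_abs_sub_le [Finite ι] (hmin : IsOMin L M)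
    (hadd : ExpandsGroup L M) {S : M → Set (ι → M)} (hS : DefinableFamily L S)
    (hmono : Monotone S) (hne : ∀ t, 0 < t → (S t).Nonempty) {r : M}
    (hr : ∀ t, ∀ x ∈ S t, ∀ l, |x l| ≤ r) :
    ∃ v : ι → M, ∀ t, 0 < t → ∃ x ∈ S t, ∀ l, |x l - v l| ≤ t := by
  classical
  suffices h : ∀ I : Finset ι, ∃ v : ι → M, ∀ t, 0 < t → ∃ x ∈ S t, ∀ l ∈ I, |x l - v l| ≤ t by
    have := Fintype.ofFinite ι
    simpa using h Finset.univ
  intro I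
  induction I using Finset.induction_on with
  | empty => exact ⟨0, fun t ht => (hne t ht).imp fun x hx => ⟨hx, by simp⟩⟩
  | insert i I hi ih =>
    obtain ⟨v, hv⟩ := ih
    obtain ⟨s, hs⟩ := (hS.sep_abs_sub_le hmin.1 hadd I v).exists_abs_apply_sub_le hmin
      (fun t₁ t₂ h x hx => ⟨hmono h hx.1, fun l hl => (hx.2 l hl).trans h⟩) hv i
      (fun t x hx => hr t x hx.1 i)
    refine ⟨Function.update v i s, fun t ht => ?_⟩
    obtain ⟨x, ⟨hx, hxv⟩, hxs⟩ := hs t ht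
    refine ⟨x, hx, (Finset.forall_mem_insert _ _ _).2 ⟨by simpa using hxs, fun l hl => ?_⟩⟩
    rw [Function.update_of_ne (ne_of_mem_of_not_mem hl hi)]
    exact hxv l hl

end Family

section Topology

variable {L : FirstOrder.Language} {M : Type} [L.Structure M] [Field M] [LinearOrder M]
  [IsStrictOrderedRing M] [TopologicalSpace M] [OrderTopology M] {ι κ : Type}

theorem tendsto_nhdsGT_zero_of_abs_sub_le {x : M → ι → M} {v : ι → M}
    (h : ∀ t, 0 < t → ∀ l, |x t l - v l| ≤ t) : Tendsto x (𝓝[>] 0) (𝓝 v) := by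
  refine tendsto_pi_nhds.2 fun l => tendsto_order.2 ⟨fun a ha => ?_, fun a ha => ?_⟩
  · filter_upwards [Ioo_mem_nhdsGT (sub_pos.2 ha)] with t ht
    linarith [(abs_sub_le_iff.1 (h t ht.1 l)).2, ht.2]
  · filter_upwards [Ioo_mem_nhdsGT (sub_pos.2 ha)] with t ht
    linarith [(abs_sub_le_iff.1 (h t ht.1 l)).1, ht.2]

theorem mem_image_of_mem_closure_image [Finite ι] [Finite κ] (hmin : IsOMin L M)
    (hadd : ExpandsGroup L M) {A : Set (ι → M)} (hA : Definable univ L A) (hAcl : IsClosed A)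
    {r : M} (hr : ∀ x ∈ A, ∀ l, |x l| ≤ r) {f : (ι → M) → κ → M} (hf : DefinableMap L univ f)
    (hcont : ContinuousOn f A) {b : κ → M} (hb : b ∈ closure (f '' A)) : b ∈ f '' A := by
  set S : M → Set (ι → M) := fun t => {x ∈ A | ∀ j, |f x j - b j| ≤ t}
  have hS : DefinableFamily L S := by
    have hnear (j : κ) : Definable univ L {w : Option ι → M | |f (w ∘ some) j - b j| ≤ w none} :=
      definable_abs_sub_le hmin.1 hadd ((hf j).comp fun _ => DefinableFun.proj L)
        (L.definableFun_const _ (mem_univ _)) (DefinableFun.proj L)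
    unfold DefinableFamily
    convert (hA.preimage_comp some).inter (definable_iInter_of_finite hnear) using 1
    ext w
    simp [S]
  have hne (t : M) (ht : 0 < t) : (S t).Nonempty := by
    have hU : (univ.pi fun j => Icc (b j - t) (b j + t)) ∈ 𝓝 b :=
      set_pi_mem_nhds finite_univ fun j _ =>
        Icc_mem_nhds (sub_lt_self _ ht) (lt_add_of_pos_right _ ht)
    obtain ⟨_, hy, x, hx, rfl⟩ := mem_closure_iff_nhds.1 hb _ hU
    exact ⟨x, hx, fun j => abs_sub_le_iff.2
      ⟨by linarith [(hy j trivial).2], by linarith [(hy j trivial).1]⟩⟩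
  obtain ⟨v, hv⟩ := hS.exists_forall_abs_sub_le hmin hadd
    (fun t₁ t₂ h x hx => ⟨hx.1, fun j => (hx.2 j).trans h⟩) hne fun t x hx => hr x hx.1
  choose! x hxS hxv using hv
  have hxA : ∀ᶠ t in 𝓝[>] 0, x t ∈ A := eventually_nhdsWithin_of_forall fun t ht => (hxS t ht).1
  have hx_lim : Tendsto x (𝓝[>] 0) (𝓝 v) := tendsto_nhdsGT_zero_of_abs_sub_le hxv
  have hvA : v ∈ A := hAcl.mem_of_tendsto hx_lim hxA
  refine ⟨v, hvA, tendsto_nhds_unique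
    ((hcont v hvA).tendsto.comp (tendsto_nhdsWithin_iff.2 ⟨hx_lim, hxA⟩))
    (tendsto_nhdsGT_zero_of_abs_sub_le fun t ht => (hxS t ht).2)⟩

theorem zero_mem_closure_image_inv_one_add_mul_self {X : Type} {A : Set X} {φ : X → M}
    (hφ : ∀ r, ∃ x ∈ A, r < |φ x|) :
    (0 : κ → M) ∈ closure ((fun x (_ : κ) => (1 + φ x * φ x)⁻¹) '' A) := by
  set l := comap (fun x => |φ x|) atTop ⊓ 𝓟 A
  have hl : l.NeBot := by
    refine inf_principal_neBot_iff.2 fun U hU => ?_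
    obtain ⟨V, hV, hVU⟩ := mem_comap.1 hU
    obtain ⟨a, ha⟩ := mem_atTop_sets.1 hV
    obtain ⟨x, hx, hax⟩ := hφ a
    exact ⟨x, hVU (ha _ hax.le), hx⟩
  have hgrow : Tendsto (fun x => 1 + φ x * φ x) l atTop :=
    tendsto_atTop_mono (fun x => by nlinarith [sq_abs (φ x), abs_nonneg (φ x)])
      (tendsto_comap.mono_left inf_le_left)
  exact mem_closure_of_tendsto (tendsto_pi_nhds.2 fun _ => hgrow.inv_tendsto_atTop)
    ((eventually_principal.2 fun x hx => mem_image_of_mem _ hx).filter_mono inf_le_right)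

end Topology

/-- Let `M` be an o-minimal expansion of a real closed field and `A ⊆ Mᵏ` definable. Then
`A` is definably compact (closed and bounded) iff for every definable `B` and every
definable continuous `f : A → B`, the image `f(A)` is closed in `B`. -/
theorem stmt17 {L : FirstOrder.Language} {M : Type} [L.Structure M]
    [Field M] [LinearOrder M] [IsStrictOrderedRing M] [TopologicalSpace M] [OrderTopology M]
    (hmin : IsOMin L M) (hfld : ExpandsField L M)
    {k : ℕ} (A : Set (Fin k → M)) (hA : Defin L M A) :
    (IsClosed A ∧ ∃ r : M, ∀ p ∈ A, ∀ i, |p i| ≤ r) ↔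
      ∀ (h : ℕ) (B : Set (Fin h → M)) (f : (Fin k → M) → (Fin h → M)),
        Defin L M B →
        Defin L M {p : Fin (k + h) → M |
          f (fun i => p (Fin.castAdd h i)) = fun j => p (Fin.natAdd k j)} →
        ContinuousOn f A → Set.MapsTo f A B →
        closure (f '' A) ∩ B ⊆ f '' A := by
  constructor
  · rintro ⟨hAcl, r, hr⟩ h B f - hG hcont - y ⟨hy, -⟩
    exact mem_image_of_mem_closure_image hmin hfld.1 hA hAcl hr (definable_graph_iff.1 hG) hcont hy
  · intro H
    have hAcl : IsClosed A := by
      refine isClosed_of_closure_subset fun x hx => ?_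
      simpa using H k univ id definable_univ (definable_graph_iff.2 fun _ => DefinableFun.proj L)
        continuousOn_id (mapsTo_univ _ _) ⟨by simpa using hx, mem_univ x⟩
    refine ⟨hAcl, ?_⟩
    by_contra hunb
    obtain ⟨i, hi⟩ := exists_forall_lt_abs_apply_of_not_bounded hunb
    have hpos (x : Fin k → M) : 1 + x i * x i ≠ 0 :=
      (add_pos_of_pos_of_nonneg one_pos (mul_self_nonneg _)).ne'
    have hg : DefinableFun L univ fun x : Fin k → M => (1 + x i * x i)⁻¹ :=
      ((L.definableFun_const _ (mem_univ 1)).add hfld.1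
        ((DefinableFun.proj L).mul hfld (DefinableFun.proj L))).inv hfld
    obtain ⟨x, -, hx⟩ := H 1 univ (fun x _ => (1 + x i * x i)⁻¹) definable_univ
      (definable_graph_iff.2 fun _ => hg) (continuous_pi fun _ => (continuous_const.add
        ((continuous_apply i).mul (continuous_apply i))).inv₀ hpos).continuousOn (mapsTo_univ _ _)
      ⟨zero_mem_closure_image_inv_one_add_mul_self hi, mem_univ _⟩
    exact inv_ne_zero (hpos x) (congrFun hx 0)
end
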